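/- arXiv:1309.3855 — 3 statements merged into one kernel-verified Lean document; each statement's English description precedes it below -/
import Mathlib

section
/- For the SEIR model with c(t) = γν(e^{-(μ+δ)t} - e^{-(μ+ν)t})/(ν-δ), the solution to ∫₀^∞ e^{-αt} c(t) dt = 1 is α = -(μ + (δ+ν)/2) + sqrt((δ-ν)²/4 + γν), provided α + μ + δ > 0 and α + μ + ν > 0. -/
/-! The kernel is `γν` times the convolution of `exp (-(μ + δ) t)` and `exp (-(μ + ν) t)`, so its
Laplace transform at `α` is `γν / ((α + μ + δ)(α + μ + ν))`. Setting `x = α + μ + (δ + ν) / 2`, the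
equation becomes `x² = (δ - ν)² / 4 + γν`, and the growth conditions force `x > 0`, i.e. the
positive root. -/

open MeasureTheory Real Set

lemma integral_exp_neg_mul_Ioi_zero {p : ℝ} (hp : 0 < p) :
    ∫ t in Ioi (0 : ℝ), exp (-p * t) = p⁻¹ := by
  rw [integral_exp_mul_Ioi (neg_neg_of_pos hp)]
  simp

lemma integral_exp_neg_mul_sub_exp_neg_mul_Ioi_zero {p q : ℝ} (hp : 0 < p) (hq : 0 < q) :
    ∫ t in Ioi (0 : ℝ), (exp (-p * t) - exp (-q * t)) = p⁻¹ - q⁻¹ := by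
  rw [integral_sub (integrableOn_exp_mul_Ioi (neg_neg_of_pos hp) 0)
    (integrableOn_exp_mul_Ioi (neg_neg_of_pos hq) 0), integral_exp_neg_mul_Ioi_zero hp,
    integral_exp_neg_mul_Ioi_zero hq]

lemma integral_exp_neg_mul_seir_kernel {γ δ μ ν α : ℝ} (hne : ν ≠ δ) (h1 : 0 < α + μ + δ)
    (h2 : 0 < α + μ + ν) :
    ∫ t in Ioi (0 : ℝ), exp (-α * t) *
        (γ * ν * (exp (-(μ + δ) * t) - exp (-(μ + ν) * t)) / (ν - δ)) =
      γ * ν / ((α + μ + δ) * (α + μ + ν)) := by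
  have hνδ : ν - δ ≠ 0 := sub_ne_zero.mpr hne
  have hintegrand : ∀ t : ℝ, exp (-α * t) *
      (γ * ν * (exp (-(μ + δ) * t) - exp (-(μ + ν) * t)) / (ν - δ)) =
        γ * ν / (ν - δ) * (exp (-(α + μ + δ) * t) - exp (-(α + μ + ν) * t)) := by
    intro t
    rw [show -(α + μ + δ) * t = -α * t + -(μ + δ) * t by ring,
      show -(α + μ + ν) * t = -α * t + -(μ + ν) * t by ring, exp_add, exp_add]
    ring
  simp_rw [hintegrand]
  rw [integral_const_mul, integral_exp_neg_mul_sub_exp_neg_mul_Ioi_zero h1 h2]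
  field_simp
  ring

theorem seir_malthusian_general (γ δ μ ν : ℝ) (hne : ν ≠ δ) (α : ℝ) (h1 : α + μ + δ > 0)
    (h2 : α + μ + ν > 0) :
    (∫ t in Set.Ioi (0 : ℝ), Real.exp (-α * t) *
        (γ * ν * (Real.exp (-(μ + δ) * t) - Real.exp (-(μ + ν) * t)) / (ν - δ))) = 1 ↔
      α = -(μ + (δ + ν) / 2) + Real.sqrt ((δ - ν) ^ 2 / 4 + γ * ν) := by
  have hx : 0 < μ + (δ + ν) / 2 + α := by linarith
  rw [integral_exp_neg_mul_seir_kernel hne h1 h2, div_eq_one_iff_eq (mul_pos h1 h2).ne',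
    eq_neg_add_iff_add_eq, eq_comm (b := √_), sqrt_eq_iff_mul_self_eq_of_pos hx]
  constructor <;> intro h <;> linarith

/-- For the SEIR model with `c(t) = γν(e^{-(μ+δ)t} - e^{-(μ+ν)t})/(ν-δ)`,
the solution of `∫₀^∞ e^{-αt} c(t) dt = 1` is
`α = -(μ + (δ+ν)/2) + sqrt((δ-ν)²/4 + γν)`, provided `α+μ+δ > 0` and `α+μ+ν > 0`. -/
theorem seir_malthusian (γ δ μ ν : ℝ) (hγ : 0 < γ) (hδ : 0 < δ) (hμ : 0 < μ)
    (hν : 0 < ν) (hne : ν ≠ δ) (α : ℝ) (h1 : α + μ + δ > 0) (h2 : α + μ + ν > 0) :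
    (∫ t in Set.Ioi (0 : ℝ), Real.exp (-α * t) *
        (γ * ν * (Real.exp (-(μ + δ) * t) - Real.exp (-(μ + ν) * t)) / (ν - δ))) = 1 ↔
      α = -(μ + (δ + ν) / 2) + Real.sqrt ((δ - ν) ^ 2 / 4 + γ * ν) :=
  seir_malthusian_general γ δ μ ν hne α h1 h2
end

section
/- For the SEIR model, R₀ = (ν/(ν+μ))·(γ/(δ+μ)) > 1 if and only if the Malthusian parameter α = -(μ + (δ+ν)/2) + sqrt((δ-ν)²/4 + γν) is strictly positive; similarly R₀ = 1 iff α = 0 and R₀ < 1 iff α < 0. -/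
/-- For the SEIR model, `R₀ = (ν/(ν+μ))(γ/(δ+μ))` compares to 1 exactly as the
Malthusian parameter `α = -(μ + (δ+ν)/2) + sqrt((δ-ν)²/4 + γν)` compares to 0. -/
theorem seir_R0_malthusian (γ δ μ ν : ℝ) (hγ : 0 < γ) (hδ : 0 < δ) (hμ : 0 < μ)
    (hν : 0 < ν) (R₀ α : ℝ)
    (hR : R₀ = ν / (ν + μ) * (γ / (δ + μ)))
    (hα : α = -(μ + (δ + ν) / 2) + Real.sqrt ((δ - ν) ^ 2 / 4 + γ * ν)) :
    (R₀ > 1 ↔ α > 0) ∧ (R₀ = 1 ↔ α = 0) ∧ (R₀ < 1 ↔ α < 0) := by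
  have hνμ : 0 < ν + μ := by linarith
  have hδμ : 0 < δ + μ := by linarith
  have hA : 0 < μ + (δ + ν) / 2 := by linarith
  set E : ℝ := (δ - ν) ^ 2 / 4 + γ * ν with hEdef
  have key : (μ + (δ + ν) / 2) ^ 2 = (δ - ν) ^ 2 / 4 + (ν + μ) * (δ + μ) := by ring
  have hRgt : R₀ > 1 ↔ γ * ν > (ν + μ) * (δ + μ) := by
    rw [hR, div_mul_div_comm, gt_iff_lt, lt_div_iff₀ (by positivity)]
    constructor <;> intro h <;> nlinarith
  have hRlt : R₀ < 1 ↔ γ * ν < (ν + μ) * (δ + μ) := by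
    rw [hR, div_mul_div_comm, div_lt_iff₀ (by positivity)]
    constructor <;> intro h <;> nlinarith
  have hαgt : α > 0 ↔ γ * ν > (ν + μ) * (δ + μ) := by
    rw [hα, gt_iff_lt, ← sub_pos]
    have hs : μ + (δ + ν) / 2 < Real.sqrt E ↔ (μ + (δ + ν) / 2) ^ 2 < E :=
      Real.lt_sqrt hA.le
    constructor <;> intro h
    · have h' : μ + (δ + ν) / 2 < Real.sqrt E := by linarith
      have := hs.mp h'
      nlinarith
    · have h' : (μ + (δ + ν) / 2) ^ 2 < E := by nlinarith
      have := hs.mpr h'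
      linarith
  have hαlt : α < 0 ↔ γ * ν < (ν + μ) * (δ + μ) := by
    rw [hα]
    have hs : Real.sqrt E < μ + (δ + ν) / 2 ↔ E < (μ + (δ + ν) / 2) ^ 2 :=
      Real.sqrt_lt' hA
    constructor <;> intro h
    · have h' : Real.sqrt E < μ + (δ + ν) / 2 := by linarith
      have := hs.mp h'
      nlinarith
    · have h' : E < (μ + (δ + ν) / 2) ^ 2 := by nlinarith
      have := hs.mpr h'
      linarith
  refine ⟨hRgt.trans hαgt.symm, ?_, hRlt.trans hαlt.symm⟩
  constructor <;> intro h
  · rcases lt_trichotomy α 0 with h' | h' | h'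
    · exact absurd ((hRlt.trans hαlt.symm).mpr h') (by simp [h])
    · exact h'
    · exact absurd ((hRgt.trans hαgt.symm).mpr h') (by simp [h])
  · rcases lt_trichotomy R₀ 1 with h' | h' | h'
    · exact absurd ((hRlt.trans hαlt.symm).mp h') (by simp [h])
    · exact h'
    · exact absurd ((hRgt.trans hαgt.symm).mp h') (by simp [h])
end

section
/- If an individual dies during the latent period with probability μ/(ν+μ), and conditional on surviving latency produces a Geometric(with success probability (δ+μ)/(γ+δ+μ)) number of offspring, then the extinction probability of the associated branching process started from one individual equals (δ+μ)/γ + μ/(ν+μ) whenever γ > (δ+μ)(ν+μ)/ν, and this quantity is in (0,1). -/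
/-- SEIR branching process: offspring distribution is 0 with probability
`μ/(ν+μ)` and, with probability `ν/(ν+μ)`, geometric with parameter
`(δ+μ)/(γ+δ+μ)`. The extinction probability (smallest fixed point in `[0,1]`
of the offspring pgf) equals `(δ+μ)/γ + μ/(ν+μ)` when `γν > (δ+μ)(ν+μ)`,
and this quantity lies in `(0,1)`. -/
theorem seir_extinction_prob (γ δ μ ν : ℝ) (hγ : 0 < γ) (hδ : 0 < δ) (hμ : 0 < μ)
    (hν : 0 < ν) (hsup : γ * ν > (δ + μ) * (ν + μ))
    (f : ℝ → ℝ)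
    (hf : ∀ s, f s = μ / (ν + μ) +
      ν / (ν + μ) * ∑' k : ℕ, (γ / (γ + δ + μ)) ^ k * ((δ + μ) / (γ + δ + μ)) * s ^ k) :
    IsLeast {s : ℝ | s ∈ Set.Icc (0 : ℝ) 1 ∧ f s = s} ((δ + μ) / γ + μ / (ν + μ)) ∧
      (δ + μ) / γ + μ / (ν + μ) ∈ Set.Ioo (0 : ℝ) 1 := by
  have hD : 0 < γ + δ + μ := by linarith
  have hνμ : 0 < ν + μ := by linarith
  set q : ℝ := (δ + μ) / γ + μ / (ν + μ) with hqdef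
  -- closed form of f on [0,1]
  have hsum : ∀ s : ℝ, 0 ≤ s → s ≤ 1 →
      f s = μ / (ν + μ) + ν / (ν + μ) * ((δ + μ) / (γ + δ + μ - γ * s)) := by
    intro s hs0 hs1
    have hE : 0 < γ + δ + μ - γ * s := by nlinarith
    have hr0 : 0 ≤ γ / (γ + δ + μ) * s := by positivity
    have hr1 : γ / (γ + δ + μ) * s < 1 := by
      rw [div_mul_eq_mul_div, div_lt_one hD]; nlinarith
    rw [hf]
    congr 1
    have hterm : ∀ k : ℕ, (γ / (γ + δ + μ)) ^ k * ((δ + μ) / (γ + δ + μ)) * s ^ k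
        = (γ / (γ + δ + μ) * s) ^ k * ((δ + μ) / (γ + δ + μ)) := by
      intro k; rw [mul_pow]; ring
    rw [tsum_congr hterm, tsum_mul_right, tsum_geometric_of_lt_one hr0 hr1]
    have h1 : (1 : ℝ) - γ / (γ + δ + μ) * s ≠ 0 := by
      have : (0:ℝ) < 1 - γ / (γ + δ + μ) * s := by linarith
      exact ne_of_gt this
    field_simp
  -- q ∈ (0,1)
  have hq0 : 0 < q := by positivity
  have hq1 : q < 1 := by
    rw [hqdef, div_add_div _ _ (ne_of_gt hγ) (ne_of_gt hνμ), div_lt_one (by positivity)]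
    nlinarith
  -- denominator at q
  have hEq : γ + δ + μ - γ * q = γ * ν / (ν + μ) := by
    rw [hqdef]; field_simp; ring
  have hEqpos : 0 < γ + δ + μ - γ * q := by rw [hEq]; positivity
  have hfq : f q = q := by
    rw [hsum q (le_of_lt hq0) (le_of_lt hq1), hEq, hqdef]
    field_simp
    ring
  refine ⟨⟨⟨⟨le_of_lt hq0, le_of_lt hq1⟩, hfq⟩, ?_⟩, hq0, hq1⟩
  rintro s ⟨⟨hs0, hs1⟩, hfs⟩
  rw [hsum s hs0 hs1] at hfs
  have hE : 0 < γ + δ + μ - γ * s := by nlinarith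
  -- clear denominators
  have hE' : (γ + δ + μ - γ * s) ≠ 0 := ne_of_gt hE
  have hνμ' : (ν + μ) ≠ 0 := ne_of_gt hνμ
  have key : s * ((ν + μ) * (γ + δ + μ - γ * s)) =
      μ * (γ + δ + μ - γ * s) + ν * (δ + μ) := by
    calc s * ((ν + μ) * (γ + δ + μ - γ * s))
        = (μ / (ν + μ) + ν / (ν + μ) * ((δ + μ) / (γ + δ + μ - γ * s))) *
          ((ν + μ) * (γ + δ + μ - γ * s)) := by rw [hfs]
      _ = μ * (γ + δ + μ - γ * s) + ν * (δ + μ) := by field_simp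
  have hfact : (s - 1) * (γ * (ν + μ) * s - ((δ + μ) * (ν + μ) + γ * μ)) = 0 := by
    nlinarith [key]
  rcases mul_eq_zero.mp hfact with h | h
  · have : s = 1 := by linarith
    rw [this]; exact le_of_lt hq1
  · have hs : γ * (ν + μ) * s = (δ + μ) * (ν + μ) + γ * μ := by linarith
    have hqe : γ * (ν + μ) * q = (δ + μ) * (ν + μ) + γ * μ := by
      rw [hqdef]; field_simp
    have : γ * (ν + μ) * q = γ * (ν + μ) * s := by rw [hqe, hs]
    have := mul_left_cancel₀ (by positivity : γ * (ν + μ) ≠ 0) this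
    linarith
end
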